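/- Let C = {c_1,…,c_m} be candidate locations, E = {e_1,…,e_n} expert locations in a normed vector space, ≻^k a top-k ranking profile, and q̂ ∈ ℝ^m any vector consistent with ≻^k. Suppose (i) every candidate location lies in ∪_{i∈[n]} B(e_i, r) for some r > 0, and (ii) diam(G(C,E,≻^k)[δ], V(≻^k)) < +∞ for some δ > 0. Then every candidate j* maximizing q̂_j over j ∈ V(≻^k) satisfies max_{j∈[m]} d_G(j*, j) ≤ r + 2δ·diam(G(C,E,≻^k)[δ], V(≻^k)), where d_G is the shortest directed path distance in G(C, E, ≻^k). -/

import Mathlib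

open scoped Classical

section VotingDefs

variable {V : Type*} [NormedAddCommGroup V] [NormedSpace ℝ V]

/-- An expert with top-`k` ranking `pref : Fin k → Fin m` prefers candidate `j` to `j'`:
`j` is ranked at some position `h`, and `j'` is either unranked or ranked strictly later. -/
def Prefers {k m : ℕ} (pref : Fin k → Fin m) (j j' : Fin m) : Prop :=
  ∃ h : Fin k, pref h = j ∧
    ((∀ h' : Fin k, pref h' ≠ j') ∨ ∃ h' : Fin k, pref h' = j' ∧ h < h')

/-- `q` is consistent with the profile `pref` of top-`k` rankings, given candidate
locations `c` and expert locations `e`. -/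
def Consistent {n k m : ℕ} (c : Fin m → V) (e : Fin n → V)
    (pref : Fin n → Fin k → Fin m) (q : Fin m → ℝ) : Prop :=
  ∀ (i : Fin n) (j j' : Fin m), Prefers (pref i) j j' →
    q j' - ‖e i - c j'‖ ≤ q j - ‖e i - c j‖

/-- Edge relation of the graph `G(C, E, ≻^k)`. -/
def HasEdge {n k m : ℕ} (pref : Fin n → Fin k → Fin m) (j j' : Fin m) : Prop :=
  ∃ i : Fin n, Prefers (pref i) j j'

/-- Weight of the edge `j → j'` in `G(C, E, ≻^k)`: the minimum of
`‖e i - c j'‖ - ‖e i - c j‖` over experts `i` preferring `j` to `j'`. -/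
noncomputable def weightG {n k m : ℕ} (c : Fin m → V) (e : Fin n → V)
    (pref : Fin n → Fin k → Fin m) (j j' : Fin m) : ℝ :=
  sInf {x : ℝ | ∃ i : Fin n, Prefers (pref i) j j' ∧ x = ‖e i - c j'‖ - ‖e i - c j‖}

/-- A directed walk along `edge` from `g` to `h`, recorded as its list of vertices. -/
def IsWalk {α : Type*} (edge : α → α → Prop) (l : List α) (g h : α) : Prop :=
  l.Chain' edge ∧ l.head? = some g ∧ l.getLast? = some h

/-- Total weight of a walk (sum of the weights of consecutive pairs). -/
noncomputable def walkWeight {α : Type*} (w : α → α → ℝ) (l : List α) : ℝ :=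
  ((l.zip l.tail).map fun p => w p.1 p.2).sum

/-- Shortest directed path distance; `+∞` if there is no directed path. -/
noncomputable def distG {α : Type*} (edge : α → α → Prop) (w : α → α → ℝ) (g h : α) : EReal :=
  sInf {x : EReal | ∃ l : List α, IsWalk edge l g h ∧ x = ((walkWeight w l : ℝ) : EReal)}

/-- Distance (number of edges) in an unweighted directed graph; `⊤` if unreachable. -/
noncomputable def hopDist {α : Type*} (edge : α → α → Prop) (g h : α) : ℕ∞ :=
  sInf {x : ℕ∞ | ∃ l : List α, IsWalk edge l g h ∧ x = ((l.length - 1 : ℕ) : ℕ∞)}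

/-- `diam(G, S)`: the longest shortest-path length between two vertices of `S`. -/
noncomputable def diamS {α : Type*} (edge : α → α → Prop) (S : Set α) : ℕ∞ :=
  ⨆ (u : α) (_ : u ∈ S) (v : α) (_ : v ∈ S), hopDist edge u v

/-- Edge relation of the unweighted graph `G(C, E, ≻^k)[δ]`. -/
def EdgeDelta {n k m : ℕ} (e : Fin n → V) (pref : Fin n → Fin k → Fin m) (δ : ℝ)
    (j j' : Fin m) : Prop :=
  ∃ i i' : Fin n, Prefers (pref i) j j' ∧ Prefers (pref i') j' j ∧ ‖e i - e i'‖ ≤ δ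

/-- Minimum cardinality of an internal `δ`-cover of `Θ`; `⊤` if no finite cover exists. -/
noncomputable def coverNum (Θ : Set V) (δ : ℝ) : ℕ∞ :=
  sInf {x : ℕ∞ | ∃ X : Finset V, ↑X ⊆ Θ ∧ (∀ θ ∈ Θ, ∃ v ∈ X, ‖θ - v‖ ≤ δ) ∧ x = (X.card : ℕ∞)}

end VotingDefs

namespace IsWalk

variable {α : Type*} {edge edge' : α → α → Prop} {l : List α} {g h : α}

lemma mono (hle : ∀ ⦃a b⦄, edge a b → edge' a b) (hl : IsWalk edge l g h) :
    IsWalk edge' l g h :=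
  ⟨hl.1.imp hle, hl.2⟩

lemma append_singleton (hl : IsWalk edge l g h) {j : α} (hj : edge h j) :
    IsWalk edge (l ++ [j]) g j := by
  obtain ⟨hchain, hhead, hlast⟩ := hl
  refine ⟨List.isChain_append.2 ⟨hchain, List.isChain_singleton j, ?_⟩,
    by simp [List.head?_append, hhead], List.getLast?_concat⟩
  rintro x hx y hy
  rw [hlast, Option.mem_some_iff] at hx
  rw [List.head?_cons, Option.mem_some_iff] at hy
  exact hx ▸ hy ▸ hj

end IsWalk

section Walks

variable {α : Type*}

@[simp]
lemma walkWeight_singleton (w : α → α → ℝ) (a : α) : walkWeight w [a] = 0 := by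
  simp [walkWeight]

lemma walkWeight_cons_cons (w : α → α → ℝ) (a b : α) (t : List α) :
    walkWeight w (a :: b :: t) = w a b + walkWeight w (b :: t) := by
  simp [walkWeight]

lemma walkWeight_append_singleton (w : α → α → ℝ) {l : List α} {h : α}
    (hl : l.getLast? = some h) (j : α) :
    walkWeight w (l ++ [j]) = walkWeight w l + w h j := by
  induction l with
  | nil => simp at hl
  | cons a t ih =>
    cases t with
    | nil =>
      obtain rfl : a = h := by simpa using hl
      simp [walkWeight]
    | cons b t =>
      rw [List.getLast?_cons_cons] at hl
      rw [List.cons_append, List.cons_append, walkWeight_cons_cons, ← List.cons_append, ih hl,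
        walkWeight_cons_cons, add_assoc]

lemma walkWeight_le_of_isWalk {edge : α → α → Prop} {w : α → α → ℝ} {f : α → ℝ} {C : ℝ}
    (hw : ∀ ⦃a b⦄, edge a b → w a b ≤ C + f b - f a) {l : List α} {g h : α}
    (hl : IsWalk edge l g h) :
    walkWeight w l ≤ C * (l.length - 1 : ℕ) + f h - f g := by
  induction l generalizing g with
  | nil => simp [IsWalk] at hl
  | cons a t ih =>
    obtain ⟨hchain, hhead, hlast⟩ := hl
    obtain rfl : a = g := by simpa using hhead
    cases t with
    | nil =>
      obtain rfl : a = h := by simpa using hlast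
      simp
    | cons b t =>
      obtain ⟨hab, hrest⟩ := List.isChain_cons_cons.1 hchain
      have hrest := ih ⟨hrest, rfl, by rwa [List.getLast?_cons_cons] at hlast⟩
      rw [walkWeight_cons_cons]
      have hedge := hw hab
      simp only [List.length_cons, Nat.add_sub_cancel, Nat.cast_add, Nat.cast_one] at hrest ⊢
      linarith

lemma distG_le_walkWeight {edge : α → α → Prop} (w : α → α → ℝ) {l : List α} {g h : α}
    (hl : IsWalk edge l g h) : distG edge w g h ≤ (walkWeight w l : EReal) :=
  sInf_le ⟨l, hl, rfl⟩

lemma exists_isWalk_of_hopDist_le {edge : α → α → Prop} {g h : α} {D : ℕ}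
    (hD : hopDist edge g h ≤ D) : ∃ l, IsWalk edge l g h ∧ l.length - 1 ≤ D := by
  set S : Set ℕ∞ := {x | ∃ l : List α, IsWalk edge l g h ∧ x = ((l.length - 1 : ℕ) : ℕ∞)}
  have hS : S.Nonempty := by
    by_contra hempty
    rw [Set.not_nonempty_iff_eq_empty] at hempty
    have : hopDist edge g h = ⊤ := show sInf S = ⊤ by rw [hempty, sInf_empty]
    exact ENat.natCast_ne_top D (top_le_iff.1 (this ▸ hD))
  obtain ⟨l, hl, hlen⟩ : sInf S ∈ S := csInf_mem hS
  refine ⟨l, hl, ?_⟩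
  have : ((l.length - 1 : ℕ) : ℕ∞) ≤ D := hlen ▸ hD
  exact_mod_cast this

lemma hopDist_le_diamS {edge : α → α → Prop} {S : Set α} {u v : α} (hu : u ∈ S) (hv : v ∈ S) :
    hopDist edge u v ≤ diamS edge S :=
  le_iSup₂_of_le u hu (le_iSup₂_of_le v hv le_rfl)

end Walks

section Voting

variable {V : Type*} [NormedAddCommGroup V] {n k m : ℕ}
  {c : Fin m → V} {e : Fin n → V} {pref : Fin n → Fin k → Fin m}

lemma prefers_first {pref : Fin k → Fin m} (hk : 0 < k) {j : Fin m} (hj : j ≠ pref ⟨0, hk⟩) :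
    Prefers pref (pref ⟨0, hk⟩) j := by
  refine ⟨⟨0, hk⟩, rfl, ?_⟩
  by_cases hranked : ∃ h', pref h' = j
  · obtain ⟨h', rfl⟩ := hranked
    refine .inr ⟨h', rfl, Fin.lt_def.2 (Nat.pos_of_ne_zero fun h0 => hj ?_)⟩
    exact congrArg pref (Fin.ext h0)
  · exact .inl (not_exists.1 hranked)

lemma weightG_le_of_prefers {i : Fin n} {j j' : Fin m} (h : Prefers (pref i) j j') :
    weightG c e pref j j' ≤ ‖e i - c j'‖ - ‖e i - c j‖ :=
  csInf_le ((Set.finite_range fun i => ‖e i - c j'‖ - ‖e i - c j‖).subset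
    (by rintro x ⟨i, -, rfl⟩; exact ⟨i, rfl⟩)).bddBelow ⟨i, h, rfl⟩

lemma hasEdge_of_edgeDelta {δ : ℝ} {u u' : Fin m} (h : EdgeDelta e pref δ u u') :
    HasEdge pref u u' :=
  let ⟨i, _, hp, _⟩ := h
  ⟨i, hp⟩

/-- The two experts of a `G[δ]` edge are `δ`-close, so the triangle inequality turns the
consistency of `q` with the reverse preference into a bound on the forward weight. -/
lemma weightG_le_of_edgeDelta {q : Fin m → ℝ} (hq : Consistent c e pref q) {δ : ℝ}
    {u u' : Fin m} (h : EdgeDelta e pref δ u u') :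
    weightG c e pref u u' ≤ 2 * δ + q u' - q u := by
  obtain ⟨i, i', hp, hp', hclose⟩ := h
  have hw := weightG_le_of_prefers (c := c) (e := e) hp
  have hcons := hq i' u' u hp'
  have h₁ : ‖e i - c u'‖ ≤ ‖e i - e i'‖ + ‖e i' - c u'‖ := norm_sub_le_norm_sub_add_norm_sub _ _ _
  have h₂ : ‖e i' - c u‖ ≤ ‖e i' - e i‖ + ‖e i - c u‖ := norm_sub_le_norm_sub_add_norm_sub _ _ _
  rw [norm_sub_rev (e i') (e i)] at h₂
  linarith

end Voting

/-- The walk goes from `j*` to the first choice `v` of an expert within `r` of `c j` along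
`G[δ]` (cost at most `2δ·diam + q̂ v - q̂ j*`, and `q̂ v ≤ q̂ j*`), then takes the edge
`v → j`, which costs at most `‖e i - c j‖ ≤ r`. -/
theorem statement4_general {V : Type*} [NormedAddCommGroup V]
    {n k m : ℕ} (hk : 0 < k)
    (c : Fin m → V) (e : Fin n → V) (pref : Fin n → Fin k → Fin m)
    (qhat : Fin m → ℝ) (hcons : Consistent c e pref qhat)
    (r : ℝ) (hballs : ∀ j : Fin m, ∃ i : Fin n, ‖c j - e i‖ ≤ r)
    (δ : ℝ) (hδ : 0 < δ)
    (hdiam : diamS (EdgeDelta e pref δ) {j : Fin m | ∃ i : Fin n, pref i ⟨0, hk⟩ = j} ≠ ⊤)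
    (jstar : Fin m) (hjV : ∃ i : Fin n, pref i ⟨0, hk⟩ = jstar)
    (hjmax : ∀ j : Fin m, (∃ i : Fin n, pref i ⟨0, hk⟩ = j) → qhat j ≤ qhat jstar) :
    ∀ j : Fin m,
      distG (HasEdge pref) (weightG c e pref) jstar j ≤
        ((r + 2 * δ *
          ((diamS (EdgeDelta e pref δ) {j : Fin m | ∃ i : Fin n, pref i ⟨0, hk⟩ = j}).toNat : ℝ)
          : ℝ) : EReal) := by
  intro j
  set firsts : Set (Fin m) := {j | ∃ i : Fin n, pref i ⟨0, hk⟩ = j}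
  set D := (diamS (EdgeDelta e pref δ) firsts).toNat
  obtain ⟨i, hij⟩ := hballs j
  set v := pref i ⟨0, hk⟩
  obtain ⟨l, hwalk, hlen⟩ := exists_isWalk_of_hopDist_le (D := D)
    ((hopDist_le_diamS (S := firsts) hjV ⟨i, rfl⟩).trans_eq (ENat.natCast_toNat hdiam).symm)
  have hweight : walkWeight (weightG c e pref) l ≤ 2 * δ * D := by
    have htelescope := walkWeight_le_of_isWalk (w := weightG c e pref) (f := qhat)
      (fun _ _ => weightG_le_of_edgeDelta hcons) hwalk
    have hsteps : 2 * δ * ((l.length - 1 : ℕ) : ℝ) ≤ 2 * δ * D := by gcongr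
    linarith [hjmax v ⟨i, rfl⟩]
  have hwalkG := hwalk.mono fun _ _ => hasEdge_of_edgeDelta
  by_cases hjv : j = v
  · subst hjv
    refine (distG_le_walkWeight _ hwalkG).trans (EReal.coe_le_coe_iff.2 ?_)
    linarith [norm_nonneg (c v - e i)]
  · have hfirst := prefers_first hk (pref := pref i) hjv
    have hlast := weightG_le_of_prefers (c := c) (e := e) hfirst
    rw [norm_sub_rev] at hlast
    refine (distG_le_walkWeight _ (hwalkG.append_singleton ⟨i, hfirst⟩)).trans
      (EReal.coe_le_coe_iff.2 ?_)
    rw [walkWeight_append_singleton _ hwalk.2.2]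
    linarith [norm_nonneg (e i - c v)]

/-- Let `q̂` be consistent with the profile. Suppose (i) every candidate
location lies in some ball `B(e i, r)` with `r > 0`, and (ii) the diameter of
`G(C,E,≻^k)[δ]` restricted to the set `V(≻^k)` of first-ranked candidates is finite for some
`δ > 0`. Then every `j*` maximizing `q̂` over `V(≻^k)` satisfies
`max_j d_G(j*, j) ≤ r + 2δ·diam(G(C,E,≻^k)[δ], V(≻^k))`. -/
theorem statement4 {V : Type*} [NormedAddCommGroup V] [NormedSpace ℝ V]
    {n k m : ℕ} (hk : 0 < k)
    (c : Fin m → V) (e : Fin n → V) (pref : Fin n → Fin k → Fin m)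
    (hinj : ∀ i, Function.Injective (pref i))
    (qhat : Fin m → ℝ) (hcons : Consistent c e pref qhat)
    (r : ℝ) (hr : 0 < r) (hballs : ∀ j : Fin m, ∃ i : Fin n, ‖c j - e i‖ ≤ r)
    (δ : ℝ) (hδ : 0 < δ)
    (hdiam : diamS (EdgeDelta e pref δ) {j : Fin m | ∃ i : Fin n, pref i ⟨0, hk⟩ = j} ≠ ⊤)
    (jstar : Fin m) (hjV : ∃ i : Fin n, pref i ⟨0, hk⟩ = jstar)
    (hjmax : ∀ j : Fin m, (∃ i : Fin n, pref i ⟨0, hk⟩ = j) → qhat j ≤ qhat jstar) :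
    ∀ j : Fin m,
      distG (HasEdge pref) (weightG c e pref) jstar j ≤
        ((r + 2 * δ *
          ((diamS (EdgeDelta e pref δ) {j : Fin m | ∃ i : Fin n, pref i ⟨0, hk⟩ = j}).toNat : ℝ)
          : ℝ) : EReal) :=
  statement4_general hk c e pref qhat hcons r hballs δ hδ hdiam jstar hjV hjmax
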